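/- arXiv:1611.07120 — 2 statements merged into one kernel-verified Lean document; each statement's English description precedes it below -/
import Mathlib

section
/- Let B be a strictly positive m×n integer matrix, let E be a basic elementary matrix of size m with nonzero offdiagonal entry at position (i,j), and suppose the i'th row of EB is not the zero row. Then there exist a matrix Q ∈ SL(n,ℤ) which is a product of nonnegative basic elementary matrices and a signed permutation matrix S ∈ SL(m,ℤ) such that the matrix SEBQ is strictly positive. -/
/-!
Rows of `E * B` other than row `i` are rows of `B`, hence strictly positive. Pick a column `b₀`
where row `i` of `E * B` is nonzero. If that entry is negative, the signed transposition
exchanging rows `i` and `j` (with a sign on the new row `j`) makes column `b₀` strictly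
positive; otherwise take `S = 1`, a product of two signed transpositions. Once one column is
strictly positive, adding a large multiple of it to each other column, one nonnegative
transvection at a time, makes the whole matrix strictly positive.
-/

/-- The matrix of a transposition of `i` and `j`, with the offdiagonal `1` at
position `(j,i)` replaced by `-1`. -/
def signedTranspoMatrix {K : ℕ} (i j : Fin K) : Matrix (Fin K) (Fin K) ℤ :=
  Matrix.of fun k l =>
    if k = i ∧ l = j then 1
    else if k = j ∧ l = i then -1
    else if k = l ∧ k ≠ i ∧ k ≠ j then 1
    else 0

/-- A signed transposition matrix. -/
def IsSignedTransposition {K : ℕ} (S : Matrix (Fin K) (Fin K) ℤ) : Prop :=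
  ∃ i j : Fin K, i ≠ j ∧ (S = signedTranspoMatrix i j ∨ S = signedTranspoMatrix j i)

/-- A signed permutation matrix: a (nonempty) product of signed transposition
matrices. -/
def IsSignedPermutation {K : ℕ} (S : Matrix (Fin K) (Fin K) ℤ) : Prop :=
  ∃ L : List (Matrix (Fin K) (Fin K) ℤ),
    L ≠ [] ∧ (∀ T ∈ L, IsSignedTransposition T) ∧ L.prod = S

/-- A nonnegative basic elementary matrix: equal to the identity except for at
most one offdiagonal entry, which is `1`. -/
def IsNonnegBasicElementary {K : ℕ} (E : Matrix (Fin K) (Fin K) ℤ) : Prop :=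
  E = 1 ∨ ∃ i j : Fin K, i ≠ j ∧ E = 1 + Matrix.single i j 1

open Matrix

theorem signedTranspoMatrix_mul_apply {K p : ℕ} {i j : Fin K} (hij : i ≠ j)
    (M : Matrix (Fin K) (Fin p) ℤ) (a : Fin K) (b : Fin p) :
    (signedTranspoMatrix i j * M) a b =
      if a = i then M j b else if a = j then -M i b else M a b := by
  rcases eq_or_ne a i with rfl | hai
  · simp [signedTranspoMatrix, mul_apply, hij]
  rcases eq_or_ne a j with rfl | haj
  · simp [signedTranspoMatrix, mul_apply, hai]
  · simp [signedTranspoMatrix, mul_apply, hai, haj]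

theorem signedTranspoMatrix_mul_eq_transvection_mul {K p : ℕ} {i j : Fin K} (hij : i ≠ j)
    (M : Matrix (Fin K) (Fin p) ℤ) :
    signedTranspoMatrix i j * M =
      transvection i j (1 : ℤ) * (transvection j i (-1 : ℤ) * (transvection i j (1 : ℤ) * M)) := by
  ext a b
  rw [signedTranspoMatrix_mul_apply hij]
  rcases eq_or_ne a i with rfl | hai
  · simp [hij, hij.symm]
  rcases eq_or_ne a j with rfl | haj
  · simp [hai]
  · simp [hai, haj]

theorem det_signedTranspoMatrix {K : ℕ} {i j : Fin K} (hij : i ≠ j) :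
    (signedTranspoMatrix i j).det = 1 := by
  simpa [hij, hij.symm] using congrArg det (signedTranspoMatrix_mul_eq_transvection_mul hij 1)

theorem signedTranspoMatrix_mul_signedTranspoMatrix {K : ℕ} {i j : Fin K} (hij : i ≠ j) :
    signedTranspoMatrix i j * signedTranspoMatrix j i = 1 := by
  rw [← Matrix.mul_one (signedTranspoMatrix j i)]
  ext a b
  simp only [signedTranspoMatrix_mul_apply hij, signedTranspoMatrix_mul_apply hij.symm]
  split_ifs <;> simp_all [one_apply]

theorem det_list_prod_eq_one {ι R : Type*} [Fintype ι] [DecidableEq ι] [CommRing R]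
    {L : List (Matrix ι ι R)}
    (hL : ∀ X ∈ L, X.det = 1) : L.prod.det = 1 := by
  rw [← coe_detMonoidHom, map_list_prod]
  exact List.prod_eq_one (by simpa using hL)

theorem IsSignedTransposition.det_eq_one {K : ℕ} {S : Matrix (Fin K) (Fin K) ℤ}
    (hS : IsSignedTransposition S) : S.det = 1 := by
  obtain ⟨i, j, hij, rfl | rfl⟩ := hS
  exacts [det_signedTranspoMatrix hij, det_signedTranspoMatrix hij.symm]

theorem IsSignedPermutation.det_eq_one {K : ℕ} {S : Matrix (Fin K) (Fin K) ℤ}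
    (hS : IsSignedPermutation S) : S.det = 1 := by
  obtain ⟨L, -, hL, rfl⟩ := hS
  exact det_list_prod_eq_one fun T hT => (hL T hT).det_eq_one

theorem IsSignedTransposition.isSignedPermutation {K : ℕ} {S : Matrix (Fin K) (Fin K) ℤ}
    (hS : IsSignedTransposition S) : IsSignedPermutation S :=
  ⟨[S], List.cons_ne_nil _ _, by simpa using hS, List.prod_singleton⟩

theorem isSignedTransposition_signedTranspoMatrix {K : ℕ} {i j : Fin K} (hij : i ≠ j) :
    IsSignedTransposition (signedTranspoMatrix i j) :=
  ⟨i, j, hij, Or.inl rfl⟩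

theorem isSignedPermutation_one {K : ℕ} {i j : Fin K} (hij : i ≠ j) :
    IsSignedPermutation (1 : Matrix (Fin K) (Fin K) ℤ) := by
  refine ⟨[signedTranspoMatrix i j, signedTranspoMatrix j i], List.cons_ne_nil _ _, ?_, ?_⟩
  · simp [isSignedTransposition_signedTranspoMatrix hij,
      isSignedTransposition_signedTranspoMatrix hij.symm]
  · simp [signedTranspoMatrix_mul_signedTranspoMatrix hij]

theorem IsNonnegBasicElementary.det_eq_one {K : ℕ} {E : Matrix (Fin K) (Fin K) ℤ}
    (hE : IsNonnegBasicElementary E) : E.det = 1 := by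
  obtain rfl | ⟨i, j, hij, rfl⟩ := hE
  exacts [det_one, det_transvection_of_ne i j hij 1]

theorem prod_replicate_transvection_one {K : ℕ} {i j : Fin K} (hij : i ≠ j) (k : ℕ) :
    (List.replicate k (transvection i j (1 : ℤ))).prod = transvection i j (k : ℤ) := by
  induction k with
  | zero => simp
  | succ k ih =>
    rw [List.replicate_succ', List.prod_append, ih, List.prod_singleton,
      transvection_mul_transvection_same i j hij, Nat.cast_succ]

theorem exists_mul_transvection_apply_pos {m n : ℕ} (M : Matrix (Fin m) (Fin n) ℤ) {b₀ : Fin n}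
    (h₀ : ∀ a, 0 < M a b₀) (b : Fin n) :
    ∃ k : ℕ, ∀ a, 0 < (M * transvection b₀ b (k : ℤ)) a b := by
  obtain ⟨K, hK⟩ := (Set.finite_range fun a => -M a b).bddAbove
  obtain ⟨k, hk⟩ := exists_nat_gt K
  refine ⟨k, fun a => ?_⟩
  have hMk : -M a b < k := (hK ⟨a, rfl⟩).trans_lt hk
  rw [mul_transvection_apply_same]
  nlinarith [h₀ a]

theorem exists_nonnegBasicElementary_prod_mul_pos {m n : ℕ} {M : Matrix (Fin m) (Fin n) ℤ}
    {b₀ : Fin n} (h₀ : ∀ a, 0 < M a b₀) :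
    ∃ L : List (Matrix (Fin n) (Fin n) ℤ),
      (∀ X ∈ L, IsNonnegBasicElementary X) ∧ ∀ a b, 0 < (M * L.prod) a b := by
  suffices ∀ s : Finset (Fin n), ∃ L : List (Matrix (Fin n) (Fin n) ℤ),
      (∀ X ∈ L, IsNonnegBasicElementary X) ∧ ∀ a, ∀ b ∈ insert b₀ s, 0 < (M * L.prod) a b by
    obtain ⟨L, hL, hpos⟩ := this Finset.univ
    exact ⟨L, hL, fun a b => hpos a b (Finset.mem_insert_of_mem (Finset.mem_univ b))⟩
  intro s
  induction s using Finset.induction_on with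
  | empty => exact ⟨[], by simp, by simpa using h₀⟩
  | insert x s _ ih =>
    obtain ⟨L, hL, hpos⟩ := ih
    rcases eq_or_ne x b₀ with rfl | hx
    · exact ⟨L, hL, by simpa using hpos⟩
    obtain ⟨k, hk⟩ :=
      exists_mul_transvection_apply_pos (M * L.prod) (fun a => hpos a b₀ (Finset.mem_insert_self _ _)) x
    refine ⟨L ++ List.replicate k (transvection b₀ x 1), ?_, ?_⟩
    · simp only [List.mem_append, List.mem_replicate]
      rintro X (hX | ⟨-, rfl⟩)
      exacts [hL X hX, Or.inr ⟨b₀, x, hx.symm, rfl⟩]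
    · rw [List.prod_append, prod_replicate_transvection_one hx.symm, ← Matrix.mul_assoc]
      intro a b hb
      rcases eq_or_ne b x with rfl | hbx
      · exact hk a
      · rw [mul_transvection_apply_of_ne _ _ _ _ hbx]
        exact hpos a b (by simp_all)

theorem exists_isSignedPermutation_mul_apply_pos {m n : ℕ} {M : Matrix (Fin m) (Fin n) ℤ}
    {i j : Fin m} (hij : i ≠ j) {b₀ : Fin n} (hM : ∀ a ≠ i, 0 < M a b₀) (hi : M i b₀ ≠ 0) :
    ∃ S : Matrix (Fin m) (Fin m) ℤ, IsSignedPermutation S ∧ ∀ a, 0 < (S * M) a b₀ := by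
  rcases hi.lt_or_gt with hneg | hpos
  · refine ⟨signedTranspoMatrix i j,
      (isSignedTransposition_signedTranspoMatrix hij).isSignedPermutation, fun a => ?_⟩
    rw [signedTranspoMatrix_mul_apply hij]
    split_ifs with hai haj
    · exact hM j hij.symm
    · linarith
    · exact hM a hai
  · refine ⟨1, isSignedPermutation_one hij, fun a => ?_⟩
    rw [Matrix.one_mul]
    rcases eq_or_ne a i with rfl | hai
    exacts [hpos, hM a hai]

theorem stmt_8_general (m n : ℕ) (B : Matrix (Fin m) (Fin n) ℤ)
    (hB : ∀ (a : Fin m) (b : Fin n), 0 < B a b)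
    (i j : Fin m) (hij : i ≠ j) (c : ℤ)
    (E : Matrix (Fin m) (Fin m) ℤ) (hE : E = 1 + Matrix.single i j c)
    (hrow : ∃ b : Fin n, (E * B) i b ≠ 0) :
    ∃ (Q : Matrix (Fin n) (Fin n) ℤ) (S : Matrix (Fin m) (Fin m) ℤ),
      (∃ L : List (Matrix (Fin n) (Fin n) ℤ),
        (∀ M ∈ L, IsNonnegBasicElementary M) ∧ L.prod = Q) ∧
      Q.det = 1 ∧ IsSignedPermutation S ∧ S.det = 1 ∧
      ∀ (a : Fin m) (b : Fin n), 0 < (S * E * B * Q) a b := by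
  obtain ⟨b₀, hb₀⟩ := hrow
  have hEB : ∀ a ≠ i, 0 < (E * B) a b₀ := fun a ha => by
    rw [show E = transvection i j c from hE, transvection_mul_apply_of_ne i j a b₀ ha]
    exact hB a b₀
  obtain ⟨S, hS, hSEB⟩ := exists_isSignedPermutation_mul_apply_pos hij hEB hb₀
  obtain ⟨L, hL, hpos⟩ := exists_nonnegBasicElementary_prod_mul_pos hSEB
  refine ⟨L.prod, S, ⟨L, hL, rfl⟩, det_list_prod_eq_one fun X hX => (hL X hX).det_eq_one,
    hS, hS.det_eq_one, ?_⟩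
  simpa only [Matrix.mul_assoc] using hpos

/-- If `B` is strictly positive, `E` is a basic elementary matrix with nonzero
offdiagonal entry at `(i,j)`, and the `i`'th row of `EB` is nonzero, then there
are `Q ∈ SL(n,ℤ)` a product of nonnegative basic elementary matrices and a
signed permutation matrix `S ∈ SL(m,ℤ)` with `SEBQ` strictly positive. -/
theorem stmt_8 (m n : ℕ) (B : Matrix (Fin m) (Fin n) ℤ)
    (hB : ∀ (a : Fin m) (b : Fin n), 0 < B a b)
    (i j : Fin m) (hij : i ≠ j) (c : ℤ) (hc : c = 1 ∨ c = -1)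
    (E : Matrix (Fin m) (Fin m) ℤ) (hE : E = 1 + Matrix.single i j c)
    (hrow : ∃ b : Fin n, (E * B) i b ≠ 0) :
    ∃ (Q : Matrix (Fin n) (Fin n) ℤ) (S : Matrix (Fin m) (Fin m) ℤ),
      (∃ L : List (Matrix (Fin n) (Fin n) ℤ),
        (∀ M ∈ L, IsNonnegBasicElementary M) ∧ L.prod = Q) ∧
      Q.det = 1 ∧ IsSignedPermutation S ∧ S.det = 1 ∧
      ∀ (a : Fin m) (b : Fin n), 0 < (S * E * B * Q) a b :=
  stmt_8_general m n B hB i j hij c E hE hrow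
end

section
/- Let E be a directed graph with finitely many vertices in which every transition state (vertex not belonging to any component of Γ_E) has exactly one outgoing edge. Then the union of two saturated hereditary subsets of E⁰ is again saturated, and the collection of sets closure(H(γ)) \ closure(H(γ)\γ), as γ ranges over the components Γ_E, is a partition of E⁰. -/
/-- The one-step edge relation of a directed graph. -/
def gStep {V E : Type} (s r : E → V) : V → V → Prop :=
  fun x y => ∃ e : E, s e = x ∧ r e = y

/-- `u ≥ v`: there is a (possibly empty) path from `u` to `v`. -/
def gReach {V E : Type} (s r : E → V) : V → V → Prop :=
  Relation.ReflTransGen (gStep s r)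

/-- A hereditary subset of vertices: closed under `≥`-successors. -/
def gHereditary {V E : Type} (s r : E → V) (H : Set V) : Prop :=
  ∀ u ∈ H, ∀ v : V, gReach s r u v → v ∈ H

/-- A regular vertex: it emits finitely many and at least one edge. -/
def gRegular {V E : Type} (s r : E → V) (v : V) : Prop :=
  {e : E | s e = v}.Finite ∧ {e : E | s e = v}.Nonempty

/-- A saturated subset of vertices: every regular vertex all of whose outgoing
edges end in `H` belongs to `H`. -/
def gSaturated {V E : Type} (s r : E → V) (H : Set V) : Prop :=
  ∀ v : V, gRegular s r v → (∀ e : E, s e = v → r e ∈ H) → v ∈ H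

/-- The hereditary subset `H(S)` generated by `S`. -/
def gHer {V E : Type} (s r : E → V) (S : Set V) : Set V :=
  {v : V | ∃ u ∈ S, gReach s r u v}

/-- The saturation of a set: the smallest saturated set containing it. -/
def gSat {V E : Type} (s r : E → V) (S : Set V) : Set V :=
  ⋂₀ {H : Set V | gSaturated s r H ∧ S ⊆ H}

/-- A strongly connected set: nonempty, and any two of its vertices are joined
by a nonempty path. -/
def gStronglyConnectedSet {V E : Type} (s r : E → V) (S : Set V) : Prop :=
  S.Nonempty ∧ ∀ u ∈ S, ∀ v ∈ S, Relation.TransGen (gStep s r) u v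

/-- A maximal strongly connected set. -/
def gMaxSCC {V E : Type} (s r : E → V) (S : Set V) : Prop :=
  gStronglyConnectedSet s r S ∧
    ∀ T : Set V, gStronglyConnectedSet s r T → S ⊆ T → S = T

/-- The components `Γ_E`: all maximal strongly connected sets together with the
singletons of singular vertices not based on a cycle. -/
def gGamma {V E : Type} (s r : E → V) : Set (Set V) :=
  {S | gMaxSCC s r S} ∪
    {S | ∃ v : V, S = {v} ∧ ¬ gRegular s r v ∧ ¬ Relation.TransGen (gStep s r) v v}

/-- The order on components: `γ₁ ≥ γ₂` iff some vertex of `γ₁` reaches some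
vertex of `γ₂`. -/
def gGammaGE {V E : Type} (s r : E → V) (γ₁ γ₂ : Set V) : Prop :=
  ∃ v₁ ∈ γ₁, ∃ v₂ ∈ γ₂, gReach s r v₁ v₂

/-- A hereditary subset of the component poset `Γ_E`. -/
def gGammaHereditary {V E : Type} (s r : E → V) (σ : Set (Set V)) : Prop :=
  ∀ γ₁ ∈ σ, ∀ γ₂ ∈ gGamma s r, gGammaGE s r γ₁ γ₂ → γ₂ ∈ σ

/-- The map `η ↦ saturation of H(∪η)` from subsets of `Γ_E` to subsets of
`E⁰`. -/
def gPhi {V E : Type} (s r : E → V) (σ : Set (Set V)) : Set V :=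
  gSat s r (gHer s r (⋃₀ σ))

/-- A transition state: a vertex belonging to no component of `Γ_E`. -/
def gTransitionState {V E : Type} (s r : E → V) (v : V) : Prop :=
  ∀ γ ∈ gGamma s r, v ∉ γ

/-!
A vertex `v` of a component `γ` lies in `H(γ)`, but not in the saturation of `H(γ) \ γ`:
the complement of a component is saturated (every vertex of a cycle component has an edge back
into it, and a singleton component is singular) and contains `H(γ) \ γ`. For the same reason
the saturation of a hereditary set meets a component only inside the set, which gives uniqueness.
A transition state `v` with unique edge `e` lies in exactly the same cells as `r e`, since
saturated hereditary sets contain `v` iff they contain `r e`. As transition states lie on no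
cycle, `r e` reaches strictly fewer transition states than `v`, so induction on that number
reduces everything to component vertices.

For the union, a regular vertex all of whose edges land in `H₁ ∪ H₂` is either a transition
state, whose single edge lands in one of the two sets, or lies on a cycle and has an edge
leading back to it, whose range pulls `v` into one of the sets by hereditarity.
-/

def gCell {V E : Type} (s r : E → V) (γ : Set V) : Set V :=
  gSat s r (gHer s r γ) \ gSat s r (gHer s r γ \ γ)

section Saturation

variable {V E : Type} {s r : E → V}

lemma gHereditary_gHer (S : Set V) : gHereditary s r (gHer s r S) := by
  rintro u ⟨a, ha, hau⟩ v huv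
  exact ⟨a, ha, hau.trans huv⟩

lemma gSaturated_gSat (S : Set V) : gSaturated s r (gSat s r S) :=
  fun v hreg hall K hK => hK.1 v hreg fun e he => hall e he K hK

lemma subset_gSat (S : Set V) : S ⊆ gSat s r S :=
  fun _ hv _ hK => hK.2 hv

lemma gSat_subset {S K : Set V} (hK : gSaturated s r K) (hSK : S ⊆ K) : gSat s r S ⊆ K :=
  fun _ hv => hv K ⟨hK, hSK⟩

/-- The vertices of `gSat H` all of whose successors stay in `gSat H` form a saturated set
containing `H`, hence all of `gSat H`. -/
lemma gHereditary_gSat {H : Set V} (hH : gHereditary s r H) :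
    gHereditary s r (gSat s r H) := by
  let H' : Set V := {v | ∀ w, gReach s r v w → w ∈ gSat s r H}
  have hH' : gSaturated s r H' := by
    intro v hreg hall w hvw
    rcases hvw.cases_head with rfl | ⟨_, ⟨e, hse, rfl⟩, hw⟩
    · exact gSaturated_gSat H v hreg fun e he => hall e he _ .refl
    · exact hall e hse _ hw
  exact fun u hu => gSat_subset hH' (fun v hv w hvw => subset_gSat H (hH v hv w hvw)) hu

lemma gSaturated.mem_of_existsUnique {K : Set V} (hK : gSaturated s r K) {v : V}
    {e₀ : E} (hse : s e₀ = v) (huniq : ∀ e, s e = v → e = e₀) (hre : r e₀ ∈ K) : v ∈ K := by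
  refine hK v ⟨(Set.finite_singleton e₀).subset huniq, e₀, hse⟩ fun e he => ?_
  rwa [huniq e he]

end Saturation

section Components

variable {V E : Type} {s r : E → V}

lemma gMaxSCC.mem_of_transGen {γ : Set V} (hγ : gMaxSCC s r γ) {u : V}
    (hto : ∀ b ∈ γ, Relation.TransGen (gStep s r) u b)
    (hfrom : ∀ b ∈ γ, Relation.TransGen (gStep s r) b u)
    (hcycle : Relation.TransGen (gStep s r) u u) : u ∈ γ := by
  have hSC : gStronglyConnectedSet s r (γ ∪ {u}) := by
    refine ⟨hγ.1.1.mono Set.subset_union_left, ?_⟩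
    rintro a (ha | rfl) b (hb | rfl)
    exacts [hγ.1.2 a ha b hb, hfrom a ha, hto b hb, hcycle]
  rw [hγ.2 _ hSC Set.subset_union_left]
  exact Or.inr rfl

lemma gMaxSCC.exists_edge_mem {γ : Set V} (hγ : gMaxSCC s r γ) {v : V} (hv : v ∈ γ) :
    ∃ e, s e = v ∧ r e ∈ γ := by
  obtain ⟨x, ⟨e, hse, rfl⟩, hxv⟩ := Relation.TransGen.head'_iff.mp (hγ.1.2 v hv v hv)
  refine ⟨e, hse, hγ.mem_of_transGen (fun b hb => ?_) (fun b hb => ?_) ?_⟩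
  · exact Relation.TransGen.trans_right hxv (hγ.1.2 v hv b hb)
  · exact (hγ.1.2 b hb v hv).tail ⟨e, hse, rfl⟩
  · exact Relation.TransGen.trans_right hxv (.single ⟨e, hse, rfl⟩)

lemma exists_mem_gGamma_of_transGen_self {v : V} (hv : Relation.TransGen (gStep s r) v v) :
    ∃ γ ∈ gGamma s r, v ∈ γ := by
  let C : Set V := {u | gReach s r v u ∧ gReach s r u v}
  have hvC : v ∈ C := ⟨.refl, .refl⟩
  refine ⟨C, Or.inl ⟨⟨⟨v, hvC⟩, ?_⟩, fun T hT hCT => ?_⟩, hvC⟩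
  · rintro a ⟨-, hav⟩ b ⟨hvb, -⟩
    exact (Relation.TransGen.trans_right hav hv).trans_left hvb
  · refine hCT.antisymm fun t ht => ?_
    exact ⟨(hT.2 v (hCT hvC) t ht).to_reflTransGen, (hT.2 t ht v (hCT hvC)).to_reflTransGen⟩

lemma not_gTransitionState_iff {v : V} :
    ¬ gTransitionState s r v ↔ ∃ γ ∈ gGamma s r, v ∈ γ := by
  simp [gTransitionState]

lemma gTransitionState.not_gReach_of_edge {v : V} (hv : gTransitionState s r v) {e : E}
    (hse : s e = v) : ¬ gReach s r (r e) v := fun hr =>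
  not_gTransitionState_iff.mpr (exists_mem_gGamma_of_transGen_self (.head' ⟨e, hse, rfl⟩ hr)) hv

lemma gSaturated_compl_of_mem_gGamma {γ : Set V} (hγ : γ ∈ gGamma s r) :
    gSaturated s r γᶜ := by
  intro v hreg hall hv
  rcases hγ with hγ | ⟨x, rfl, hxreg, -⟩
  · obtain ⟨e, hse, hreγ⟩ := hγ.exists_edge_mem hv
    exact hall e hse hreγ
  · exact hxreg (Set.mem_singleton_iff.mp hv ▸ hreg)

lemma eq_of_mem_gGamma {γ₁ γ₂ : Set V} (h₁ : γ₁ ∈ gGamma s r) (h₂ : γ₂ ∈ gGamma s r) {v : V}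
    (hv₁ : v ∈ γ₁) (hv₂ : v ∈ γ₂) : γ₁ = γ₂ := by
  rcases h₁ with h₁ | ⟨x₁, rfl, -, hc₁⟩ <;> rcases h₂ with h₂ | ⟨x₂, rfl, -, hc₂⟩
  · have hSC : gStronglyConnectedSet s r (γ₁ ∪ γ₂) := by
      refine ⟨h₁.1.1.mono Set.subset_union_left, ?_⟩
      rintro a (ha | ha) b (hb | hb)
      · exact h₁.1.2 a ha b hb
      · exact (h₁.1.2 a ha v hv₁).trans_left (h₂.1.2 v hv₂ b hb).to_reflTransGen
      · exact (h₂.1.2 a ha v hv₂).trans_left (h₁.1.2 v hv₁ b hb).to_reflTransGen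
      · exact h₂.1.2 a ha b hb
    exact (h₁.2 _ hSC Set.subset_union_left).trans (h₂.2 _ hSC Set.subset_union_right).symm
  · exact absurd (h₁.1.2 v hv₁ v hv₁) (Set.mem_singleton_iff.mp hv₂ ▸ hc₂)
  · exact absurd (h₂.1.2 v hv₂ v hv₂) (Set.mem_singleton_iff.mp hv₁ ▸ hc₁)
  · rw [← Set.mem_singleton_iff.mp hv₁, ← Set.mem_singleton_iff.mp hv₂]

/-- A path from `H(γ) \ γ` back into `γ` would put its start on the cycle through `γ`. -/
lemma gHereditary_gHer_diff {γ : Set V} (hγ : γ ∈ gGamma s r) :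
    gHereditary s r (gHer s r γ \ γ) := by
  rintro u ⟨⟨a, haγ, hau⟩, huγ⟩ w huw
  refine ⟨⟨a, haγ, hau.trans huw⟩, fun hwγ => huγ ?_⟩
  rcases hγ with hγ | ⟨x, rfl, -, hc⟩
  · have hua : Relation.TransGen (gStep s r) u a := Relation.TransGen.trans_right huw (hγ.1.2 w hwγ a haγ)
    refine hγ.mem_of_transGen (fun b hb => ?_) (fun b hb => ?_) (hua.trans_left hau)
    · exact hua.trans_left (hγ.1.2 a haγ b hb).to_reflTransGen
    · exact (hγ.1.2 b hb a haγ).trans_left hau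
  · rw [Set.mem_singleton_iff] at haγ hwγ
    subst haγ hwγ
    rcases hau.cases_head with rfl | ⟨c, hac, hcu⟩
    · rfl
    · exact absurd (.head' hac (hcu.trans huw)) hc

lemma not_mem_gSat_of_mem_gGamma {H : Set V} (hH : gHereditary s r H) {γ : Set V}
    (hγ : γ ∈ gGamma s r) {v : V} (hv : v ∈ γ) (hvH : v ∉ H) : v ∉ gSat s r H := by
  refine fun hsat => gSat_subset (gSaturated_compl_of_mem_gGamma hγ) (fun u hu huγ => ?_) hsat hv
  rcases hγ with hγ | ⟨x, rfl, -, -⟩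
  · exact hvH (hH u hu v (hγ.1.2 u huγ v hv).to_reflTransGen)
  · rw [Set.mem_singleton_iff] at huγ hv
    exact hvH (hv ▸ huγ ▸ hu)

lemma existsUnique_gCell_of_mem_gGamma {γ₀ : Set V} (hγ₀ : γ₀ ∈ gGamma s r) {v : V}
    (hv : v ∈ γ₀) : ∃! γ, γ ∈ gGamma s r ∧ v ∈ gCell s r γ := by
  refine ⟨γ₀, ⟨hγ₀, subset_gSat _ ⟨v, hv, .refl⟩, fun hsat => ?_⟩, ?_⟩
  · exact gSat_subset (gSaturated_compl_of_mem_gGamma hγ₀) (fun u hu => hu.2) hsat hv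
  · rintro γ ⟨hγ, hmem, hnmem⟩
    by_cases hvH : v ∈ gHer s r γ
    · by_contra hne
      exact hnmem (subset_gSat _ ⟨hvH, fun hvγ => hne (eq_of_mem_gGamma hγ hγ₀ hvγ hv)⟩)
    · exact absurd hmem (not_mem_gSat_of_mem_gGamma (gHereditary_gHer γ) hγ₀ hv hvH)

lemma mem_gCell_iff_of_existsUnique {v : V} {e₀ : E} (hse : s e₀ = v)
    (huniq : ∀ e, s e = v → e = e₀) {γ : Set V} (hγ : γ ∈ gGamma s r) :
    v ∈ gCell s r γ ↔ r e₀ ∈ gCell s r γ := by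
  have hstep : gReach s r v (r e₀) := .single ⟨e₀, hse, rfl⟩
  refine and_congr ⟨fun h => gHereditary_gSat (gHereditary_gHer γ) v h _ hstep,
    (gSaturated_gSat _).mem_of_existsUnique hse huniq⟩ (not_congr ⟨fun h => ?_, fun h => ?_⟩)
  · exact gHereditary_gSat (gHereditary_gHer_diff hγ) v h _ hstep
  · exact (gSaturated_gSat _).mem_of_existsUnique hse huniq h

end Components

section TransitionStates

variable {V E : Type} {s r : E → V}

lemma gSaturated_union (hts : ∀ v, gTransitionState s r v → ∃! e, s e = v) {H₁ H₂ : Set V}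
    (h₁ : gHereditary s r H₁) (h₁' : gSaturated s r H₁)
    (h₂ : gHereditary s r H₂) (h₂' : gSaturated s r H₂) : gSaturated s r (H₁ ∪ H₂) := by
  intro v hreg hall
  by_cases hv : gTransitionState s r v
  · obtain ⟨e₀, hse, huniq⟩ := hts v hv
    exact (hall e₀ hse).imp (h₁'.mem_of_existsUnique hse huniq) (h₂'.mem_of_existsUnique hse huniq)
  · obtain ⟨γ, hγ | ⟨x, rfl, hxreg, -⟩, hvγ⟩ := not_gTransitionState_iff.mp hv
    · obtain ⟨e, hse, hreγ⟩ := hγ.exists_edge_mem hvγ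
      have hback : gReach s r (r e) v := (hγ.1.2 _ hreγ v hvγ).to_reflTransGen
      exact (hall e hse).imp (fun h => h₁ _ h v hback) (fun h => h₂ _ h v hback)
    · exact absurd (Set.mem_singleton_iff.mp hvγ ▸ hreg) hxreg

lemma ncard_reachable_gTransitionState_lt [Finite V] {v : V} (hv : gTransitionState s r v)
    {e : E} (hse : s e = v) :
    {x | gReach s r (r e) x ∧ gTransitionState s r x}.ncard <
      {x | gReach s r v x ∧ gTransitionState s r x}.ncard := by
  refine Set.ncard_lt_ncard ⟨fun x hx => ⟨.head ⟨e, hse, rfl⟩ hx.1, hx.2⟩, fun hsub => ?_⟩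
    (Set.toFinite _)
  exact hv.not_gReach_of_edge hse (hsub ⟨.refl, hv⟩).1

lemma existsUnique_gCell [Finite V] (hts : ∀ v, gTransitionState s r v → ∃! e, s e = v)
    (v : V) : ∃! γ, γ ∈ gGamma s r ∧ v ∈ gCell s r γ := by
  by_cases hv : gTransitionState s r v
  · obtain ⟨e₀, hse, huniq⟩ := hts v hv
    have := ncard_reachable_gTransitionState_lt hv hse
    refine existsUnique_congr (fun γ => ?_) |>.mpr (existsUnique_gCell hts (r e₀))
    exact and_congr_right (mem_gCell_iff_of_existsUnique hse huniq)
  · obtain ⟨γ, hγ, hvγ⟩ := not_gTransitionState_iff.mp hv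
    exact existsUnique_gCell_of_mem_gGamma hγ hvγ
termination_by {x | gReach s r v x ∧ gTransitionState s r x}.ncard

end TransitionStates

/-- Let `E` be a graph with finitely many vertices in which every transition
state has exactly one outgoing edge.  Then the union of two saturated
hereditary subsets is saturated, and the sets
`closure(H(γ)) \ closure(H(γ) \ γ)`, `γ ∈ Γ_E`, form a partition of `E⁰`. -/
theorem stmt_18 (V E : Type) [Fintype V] (s r : E → V)
    (hts : ∀ v : V, gTransitionState s r v → ∃! e : E, s e = v) :
    (∀ H₁ H₂ : Set V,
      gHereditary s r H₁ → gSaturated s r H₁ →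
      gHereditary s r H₂ → gSaturated s r H₂ →
      gSaturated s r (H₁ ∪ H₂)) ∧
    (∀ v : V, ∃! γ : Set V, γ ∈ gGamma s r ∧
      v ∈ gSat s r (gHer s r γ) \ gSat s r (gHer s r γ \ γ)) :=
  ⟨fun _ _ h₁ h₁' h₂ h₂' => gSaturated_union hts h₁ h₁' h₂ h₂', existsUnique_gCell hts⟩
end
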